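/- For any smooth skew-symmetric matrix field A : ℝ³ → so(3), with α = −Curl A and 𝔎 = D axl A, one has ‖𝔎‖² = ‖dev sym α‖² + ‖skw α‖² + (1/12)(tr α)². -/
import Mathlib


open Matrix BigOperators

noncomputable section

abbrev V3 := Fin 3 → ℝ
abbrev M3 := Matrix (Fin 3) (Fin 3) ℝ

/-- axial vector of a 3×3 matrix (intended for skew-symmetric matrices) -/
def axl (A : M3) : V3 := ![A 2 1, A 0 2, A 1 0]

/-- the skew-symmetric matrix with given axial vector -/
def antiM (v : V3) : M3 := !![0, -v 2, v 1; v 2, 0, -v 0; -v 1, v 0, 0]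

def symM (X : M3) : M3 := (1/2 : ℝ) • (X + Xᵀ)
def skwM (X : M3) : M3 := (1/2 : ℝ) • (X - Xᵀ)
def devM (X : M3) : M3 := X - ((Matrix.trace X)/3) • (1 : M3)

/-- squared Frobenius norm -/
def frob2 (X : M3) : ℝ := ∑ i, ∑ j, (X i j)^2
/-- Frobenius inner product ⟨X,Y⟩ = tr(XYᵀ) -/
def finner (X Y : M3) : ℝ := ∑ i, ∑ j, X i j * Y i j
/-- squared Euclidean norm of a vector -/
def norm2v (v : V3) : ℝ := ∑ i, (v i)^2

/-- partial derivative ∂ᵢ f -/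
def pd (i : Fin 3) (f : V3 → ℝ) (x : V3) : ℝ := fderiv ℝ f x (Pi.single i 1)

/-- Jacobian matrix (D u)_{ij} = ∂_j u_i -/
def jac (u : V3 → V3) (x : V3) : M3 := Matrix.of fun i j => pd j (fun y => u y i) x

/-- curl of a vector field -/
def curlV (u : V3 → V3) (x : V3) : V3 :=
  ![pd 1 (fun y => u y 2) x - pd 2 (fun y => u y 1) x,
    pd 2 (fun y => u y 0) x - pd 0 (fun y => u y 2) x,
    pd 0 (fun y => u y 1) x - pd 1 (fun y => u y 0) x]

/-- row-wise matrix Curl : (Curl P)_{ij} = ε_{jmn} ∂_m P_{in} -/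
def curlM (P : V3 → M3) (x : V3) : M3 := Matrix.of fun i => curlV (fun y => P y i) x

/-- Levi-Civita symbol on Fin 3 -/
def lc (i j k : Fin 3) : ℝ :=
  ((j.val : ℝ) - (i.val : ℝ)) * ((k.val : ℝ) - (j.val : ℝ)) * ((k.val : ℝ) - (i.val : ℝ)) / 2


lemma pd_neg (i : Fin 3) (f : V3 → ℝ) (x : V3) :
    pd i (fun y => -(f y)) x = -(pd i f x) := by
  simp [pd, fderiv_neg]

lemma pd_zero (i : Fin 3) (x : V3) : pd i (fun _ : V3 => (0:ℝ)) x = 0 := by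
  simp [pd]

theorem curvature_norm_identity (A : V3 → M3)
    (hskew : ∀ x, (A x)ᵀ = -(A x))
    (hsmooth : ∀ i j, ContDiff ℝ 1 (fun x => A x i j)) :
    ∀ x : V3,
      frob2 (jac (fun y => axl (A y)) x) =
        frob2 (devM (symM (-(curlM A x)))) + frob2 (skwM (-(curlM A x)))
          + (Matrix.trace (-(curlM A x)))^2 / 12 := by
  intro x
  have hsk : ∀ y (i j : Fin 3), A y i j = -(A y j i) := by
    intro y i j
    have := congrFun (congrFun (hskew y) j) i
    simpa using this
  have e00 : (fun y => A y 0 0) = (fun _ : V3 => (0:ℝ)) := by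
    funext y; have := hsk y 0 0; linarith
  have e11 : (fun y => A y 1 1) = (fun _ : V3 => (0:ℝ)) := by
    funext y; have := hsk y 1 1; linarith
  have e22 : (fun y => A y 2 2) = (fun _ : V3 => (0:ℝ)) := by
    funext y; have := hsk y 2 2; linarith
  have e12 : (fun y => A y 1 2) = (fun y => -(A y 2 1)) := by
    funext y; exact hsk y 1 2
  have e20 : (fun y => A y 2 0) = (fun y => -(A y 0 2)) := by
    funext y; exact hsk y 2 0
  have e01 : (fun y => A y 0 1) = (fun y => -(A y 1 0)) := by
    funext y; exact hsk y 0 1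
  have ax0 : (fun y => axl (A y) 0) = (fun y => A y 2 1) := by funext y; simp [axl]
  have ax1 : (fun y => axl (A y) 1) = (fun y => A y 0 2) := by funext y; simp [axl]
  have ax2 : (fun y => axl (A y) 2) = (fun y => A y 1 0) := by funext y; simp [axl]
  simp only [frob2, jac, curlM, curlV, devM, symM, skwM, Matrix.trace, Matrix.diag,
    Fin.sum_univ_three, Matrix.of_apply, Matrix.cons_val', Matrix.cons_val_zero,
    Matrix.cons_val_one, Matrix.head_cons, Matrix.cons_val_two, Matrix.tail_cons,
    Matrix.head_fin_const, Matrix.neg_apply, Matrix.add_apply, Matrix.sub_apply,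
    Matrix.smul_apply, Matrix.transpose_apply, Matrix.one_apply, smul_eq_mul,
    ax0, ax1, ax2, e00, e11, e22, e12, e20, e01, pd_neg, pd_zero]
  norm_num [Fin.ext_iff]
  ring
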